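/- Let ψ be bounded, positive, and Riemann integrable on I, Ψ(x) = Ψ(a) + ∫_{[a,x]} ψ. Then a bounded function f on I is Riemann-Stieltjes integrable with respect to Ψ on I if and only if fψ is Riemann integrable on I, and in that case ∫_I f dΨ = ∫_I fψ. -/

import Mathlib

open Set Filter

/-- A partition of `[a,b]` given by cut points `x 0 = a < x 1 < ... < x n = b`. -/
structure RSPartition (a b : ℝ) where
  n : ℕ
  hn : 0 < n
  x : ℕ → ℝ
  mono : ∀ i < n, x i < x (i + 1)
  left : x 0 = a
  right : x n = b

/-- Upper Riemann-Stieltjes sum of `f` w.r.t. `Ψ` along a partition. -/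
noncomputable def upperSum (f Ψ : ℝ → ℝ) {a b : ℝ} (P : RSPartition a b) : ℝ :=
  ∑ k ∈ Finset.range P.n,
    sSup (f '' Set.Icc (P.x k) (P.x (k + 1))) * (Ψ (P.x (k + 1)) - Ψ (P.x k))

/-- Lower Riemann-Stieltjes sum of `f` w.r.t. `Ψ` along a partition. -/
noncomputable def lowerSum (f Ψ : ℝ → ℝ) {a b : ℝ} (P : RSPartition a b) : ℝ :=
  ∑ k ∈ Finset.range P.n,
    sInf (f '' Set.Icc (P.x k) (P.x (k + 1))) * (Ψ (P.x (k + 1)) - Ψ (P.x k))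

/-- Upper Riemann-Stieltjes integral `U(f,Ψ)`. -/
noncomputable def upperInt (f Ψ : ℝ → ℝ) (a b : ℝ) : ℝ :=
  ⨅ P : RSPartition a b, upperSum f Ψ P

/-- Lower Riemann-Stieltjes integral `L(f,Ψ)`. -/
noncomputable def lowerInt (f Ψ : ℝ → ℝ) (a b : ℝ) : ℝ :=
  ⨆ P : RSPartition a b, lowerSum f Ψ P

/-- `f` is Riemann-Stieltjes integrable w.r.t. `Ψ` on `[a,b]`. -/
def RSIntegrable (f Ψ : ℝ → ℝ) (a b : ℝ) : Prop :=
  upperInt f Ψ a b = lowerInt f Ψ a b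

/-- The Riemann-Stieltjes integral `∫_[a,b] f dΨ` (meaningful when `RSIntegrable`). -/
noncomputable def RSIntegral (f Ψ : ℝ → ℝ) (a b : ℝ) : ℝ := upperInt f Ψ a b

/-- Riemann integrability is the case `Ψ = id`. -/
def RIntegrable (f : ℝ → ℝ) (a b : ℝ) : Prop := RSIntegrable f id a b

/-- Riemann integral `∫_[a,b] f`. -/
noncomputable def RIntegral (f : ℝ → ℝ) (a b : ℝ) : ℝ := RSIntegral f id a b

/-- The `ψ`-length `|S|_Ψ = ∫_I χ_S ψ` of a subset `S ⊆ [a,b]`. -/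
noncomputable def lengthW (ψ : ℝ → ℝ) (a b : ℝ) (S : Set ℝ) : ℝ :=
  RIntegral (S.indicator ψ) a b

/-- Modified upper Riemann sum `u(f,Ψ,P¹)` (with `Ψ' = ψ` and set map `Φ`). -/
noncomputable def uMod (f ψ : ℝ → ℝ) (Φ : Set ℝ → Set ℝ) {a b : ℝ} (P : RSPartition a b) : ℝ :=
  ∑ k ∈ Finset.range P.n,
    sSup (f '' Φ (Set.Icc (P.x k) (P.x (k + 1)))) *
      lengthW ψ a b (Φ (Set.Icc (P.x k) (P.x (k + 1))))

/-- Modified lower Riemann sum `l(f,Ψ,P¹)`. -/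
noncomputable def lMod (f ψ : ℝ → ℝ) (Φ : Set ℝ → Set ℝ) {a b : ℝ} (P : RSPartition a b) : ℝ :=
  ∑ k ∈ Finset.range P.n,
    sInf (f '' Φ (Set.Icc (P.x k) (P.x (k + 1)))) *
      lengthW ψ a b (Φ (Set.Icc (P.x k) (P.x (k + 1))))

/-- `u(f,Ψ) = inf_P u(f,Ψ,P¹)`. -/
noncomputable def uModInt (f ψ : ℝ → ℝ) (Φ : Set ℝ → Set ℝ) (a b : ℝ) : ℝ :=
  ⨅ P : RSPartition a b, uMod f ψ Φ P

/-- `l(f,Ψ) = sup_P l(f,Ψ,P¹)`. -/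
noncomputable def lModInt (f ψ : ℝ → ℝ) (Φ : Set ℝ → Set ℝ) (a b : ℝ) : ℝ :=
  ⨆ P : RSPartition a b, lMod f ψ Φ P

/-- An arbitrary modified Riemann sum `s(f,Ψ,P¹)` with sample points `ξ k ∈ Φ(I_k)`. -/
noncomputable def sMod (f ψ : ℝ → ℝ) (Φ : Set ℝ → Set ℝ) {a b : ℝ} (P : RSPartition a b)
    (ξ : ℕ → ℝ) : ℝ :=
  ∑ k ∈ Finset.range P.n,
    f (ξ k) * lengthW ψ a b (Φ (Set.Icc (P.x k) (P.x (k + 1))))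

/-- An arbitrary Riemann-Stieltjes sum with sample points `ξ k ∈ I_k`. -/
noncomputable def riemannSum (f Ψ : ℝ → ℝ) {a b : ℝ} (P : RSPartition a b) (ξ : ℕ → ℝ) : ℝ :=
  ∑ k ∈ Finset.range P.n, f (ξ k) * (Ψ (P.x (k + 1)) - Ψ (P.x k))

/-- `f` is bounded on `[a,b]`. -/
def BoundedOnI (f : ℝ → ℝ) (a b : ℝ) : Prop := ∃ M, ∀ x ∈ Set.Icc a b, |f x| ≤ M

/-- The set of cut points of a partition. -/
def cuts {a b : ℝ} (P : RSPartition a b) : Set ℝ := {y | ∃ i ≤ P.n, P.x i = y}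




section Aux

open Finset in
theorem RSPartition.x_lt_x {a b : ℝ} (P : RSPartition a b) : ∀ {i j : ℕ}, i < j → j ≤ P.n →
    P.x i < P.x j := by
  intro i j
  induction j with
  | zero => omega
  | succ m ih =>
    intro hij hj
    rcases Nat.lt_succ_iff_lt_or_eq.mp hij with h | h
    · exact lt_trans (ih h (by omega)) (P.mono m (by omega))
    · subst h; exact P.mono i (by omega)

theorem RSPartition.x_le_x {a b : ℝ} (P : RSPartition a b) {i j : ℕ} (hij : i ≤ j) (hj : j ≤ P.n) :
    P.x i ≤ P.x j := by
  rcases eq_or_lt_of_le hij with h | h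
  · subst h; exact le_rfl
  · exact le_of_lt (P.x_lt_x h hj)

theorem RSPartition.x_mem {a b : ℝ} (P : RSPartition a b) {i : ℕ} (hi : i ≤ P.n) :
    P.x i ∈ Set.Icc a b := by
  constructor
  · have h := P.x_le_x (Nat.zero_le i) hi
    rwa [P.left] at h
  · have h := P.x_le_x hi le_rfl
    rwa [P.right] at h

noncomputable def RSPartition.single {a b : ℝ} (hab : a < b) : RSPartition a b where
  n := 1
  hn := one_pos
  x := fun i => if i = 0 then a else b
  mono := by
    intro i hi
    have h0 : i = 0 := by omega
    subst h0
    simpa using hab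
  left := by simp
  right := by simp

theorem nonempty_partition {a b : ℝ} (hab : a < b) : Nonempty (RSPartition a b) :=
  ⟨RSPartition.single hab⟩

theorem isEmpty_partition {a b : ℝ} (hab : b ≤ a) : IsEmpty (RSPartition a b) := by
  constructor
  intro P
  have := P.x_lt_x (show 0 < P.n from P.hn) le_rfl
  rw [P.left, P.right] at this
  linarith

theorem upperInt_of_le {f Ψ : ℝ → ℝ} {a b : ℝ} (hab : b ≤ a) : upperInt f Ψ a b = 0 := by
  haveI := isEmpty_partition hab
  simp [upperInt, iInf, Set.range_eq_empty, Real.sInf_empty]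

theorem image_Icc_nonempty {f : ℝ → ℝ} {u v : ℝ} (h : u ≤ v) : (f '' Set.Icc u v).Nonempty :=
  ⟨f u, Set.mem_image_of_mem _ (Set.left_mem_Icc.mpr h)⟩

theorem bddAbove_image_of_le {f : ℝ → ℝ} {a b B : ℝ} (hfB : ∀ x ∈ Set.Icc a b, f x ≤ B)
    {u v : ℝ} (h : Set.Icc u v ⊆ Set.Icc a b) : BddAbove (f '' Set.Icc u v) := by
  refine ⟨B, ?_⟩
  rintro y ⟨x, hx, rfl⟩
  exact hfB x (h hx)

theorem bddBelow_image_of_le {f : ℝ → ℝ} {a b B : ℝ} (hfB : ∀ x ∈ Set.Icc a b, B ≤ f x)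
    {u v : ℝ} (h : Set.Icc u v ⊆ Set.Icc a b) : BddBelow (f '' Set.Icc u v) := by
  refine ⟨B, ?_⟩
  rintro y ⟨x, hx, rfl⟩
  exact hfB x (h hx)

theorem sum_Ico_tele (g : ℕ → ℝ) {m n : ℕ} (h : m ≤ n) :
    ∑ j ∈ Finset.Ico m n, (g (j + 1) - g j) = g n - g m := by
  rw [Finset.sum_Ico_eq_sub _ h, Finset.sum_range_sub, Finset.sum_range_sub]
  ring


theorem upperSum_refine {a b : ℝ} {f W : ℝ → ℝ} (hW : MonotoneOn W (Set.Icc a b))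
    {B : ℝ} (hfB : ∀ x ∈ Set.Icc a b, f x ≤ B)
    (P Q : RSPartition a b)
    (hPQ : ∀ i ≤ P.n, ∃ j ≤ Q.n, Q.x j = P.x i) :
    upperSum f W Q ≤ upperSum f W P := by
  have H : ∀ i : ℕ, ∃ j, j ≤ Q.n ∧ Q.x j = P.x (min i P.n) := by
    intro i
    obtain ⟨j, hj, e⟩ := hPQ (min i P.n) (min_le_right _ _)
    exact ⟨j, hj, e⟩
  set σ : ℕ → ℕ := fun i => (H i).choose with hσdef
  have hσn : ∀ i, σ i ≤ Q.n := fun i => (H i).choose_spec.1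
  have hσx : ∀ i ≤ P.n, Q.x (σ i) = P.x i := by
    intro i hi
    exact (H i).choose_spec.2.trans (congrArg P.x (min_eq_left hi))
  have hσmono : ∀ i j, i < j → j ≤ P.n → σ i < σ j := by
    intro i j hij hj
    by_contra hcon
    push_neg at hcon
    have h1 : Q.x (σ j) ≤ Q.x (σ i) := Q.x_le_x hcon (hσn i)
    rw [hσx i (le_of_lt (lt_of_lt_of_le hij hj)), hσx j hj] at h1
    exact absurd h1 (not_le.mpr (P.x_lt_x hij hj))
  have hσ0 : σ 0 = 0 := by
    by_contra hcon
    have h1 : Q.x 0 < Q.x (σ 0) := Q.x_lt_x (Nat.pos_of_ne_zero hcon) (hσn 0)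
    rw [hσx 0 (Nat.zero_le _), Q.left, P.left] at h1
    exact lt_irrefl a h1
  have hσN : σ P.n = Q.n := by
    rcases eq_or_lt_of_le (hσn P.n) with h | h
    · exact h
    · exfalso
      have h1 : Q.x (σ P.n) < Q.x Q.n := Q.x_lt_x h le_rfl
      rw [hσx P.n le_rfl, Q.right, P.right] at h1
      exact lt_irrefl b h1
  have key : ∀ m ≤ P.n,
      (∑ j ∈ Finset.range (σ m),
        sSup (f '' Set.Icc (Q.x j) (Q.x (j + 1))) * (W (Q.x (j + 1)) - W (Q.x j)))
      ≤ ∑ i ∈ Finset.range m,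
        sSup (f '' Set.Icc (P.x i) (P.x (i + 1))) * (W (P.x (i + 1)) - W (P.x i)) := by
    intro m
    induction m with
    | zero => intro _; rw [hσ0]; simp
    | succ m ih =>
      intro hm
      have hmle : m ≤ P.n := by omega
      have hle : σ m ≤ σ (m + 1) := le_of_lt (hσmono m (m + 1) (by omega) hm)
      have hsplit : (∑ j ∈ Finset.range (σ (m + 1)),
            sSup (f '' Set.Icc (Q.x j) (Q.x (j + 1))) * (W (Q.x (j + 1)) - W (Q.x j)))
          = (∑ j ∈ Finset.range (σ m),
            sSup (f '' Set.Icc (Q.x j) (Q.x (j + 1))) * (W (Q.x (j + 1)) - W (Q.x j)))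
          + ∑ j ∈ Finset.Ico (σ m) (σ (m + 1)),
            sSup (f '' Set.Icc (Q.x j) (Q.x (j + 1))) * (W (Q.x (j + 1)) - W (Q.x j)) := by
        rw [Finset.range_eq_Ico, Finset.range_eq_Ico, Finset.sum_Ico_consecutive _ (Nat.zero_le _) hle]
      have hico : (∑ j ∈ Finset.Ico (σ m) (σ (m + 1)),
            sSup (f '' Set.Icc (Q.x j) (Q.x (j + 1))) * (W (Q.x (j + 1)) - W (Q.x j)))
          ≤ sSup (f '' Set.Icc (P.x m) (P.x (m + 1))) * (W (P.x (m + 1)) - W (P.x m)) := by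
        have step : ∀ j ∈ Finset.Ico (σ m) (σ (m + 1)),
            sSup (f '' Set.Icc (Q.x j) (Q.x (j + 1))) * (W (Q.x (j + 1)) - W (Q.x j))
            ≤ sSup (f '' Set.Icc (P.x m) (P.x (m + 1))) * (W (Q.x (j + 1)) - W (Q.x j)) := by
          intro j hj
          rw [Finset.mem_Ico] at hj
          have hj1 : j + 1 ≤ Q.n := le_trans hj.2 (hσn (m + 1))
          have hQj : Q.x j < Q.x (j + 1) := Q.x_lt_x (by omega) hj1
          have hsub : Set.Icc (Q.x j) (Q.x (j + 1)) ⊆ Set.Icc (P.x m) (P.x (m + 1)) := by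
            apply Set.Icc_subset_Icc
            · rw [← hσx m hmle]; exact Q.x_le_x hj.1 (by omega)
            · rw [← hσx (m + 1) hm]; exact Q.x_le_x hj.2 (hσn (m + 1))
          have hΔ : 0 ≤ W (Q.x (j + 1)) - W (Q.x j) := by
            have hh := hW (Q.x_mem (show j ≤ Q.n by omega)) (Q.x_mem hj1) (le_of_lt hQj)
            linarith
          apply mul_le_mul_of_nonneg_right _ hΔ
          have hsub2 : Set.Icc (P.x m) (P.x (m + 1)) ⊆ Set.Icc a b :=
            Set.Icc_subset_Icc (P.x_mem hmle).1 (P.x_mem hm).2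
          exact csSup_le_csSup (bddAbove_image_of_le hfB hsub2)
            (image_Icc_nonempty (le_of_lt hQj)) (Set.image_mono hsub)
        calc (∑ j ∈ Finset.Ico (σ m) (σ (m + 1)),
              sSup (f '' Set.Icc (Q.x j) (Q.x (j + 1))) * (W (Q.x (j + 1)) - W (Q.x j)))
            ≤ ∑ j ∈ Finset.Ico (σ m) (σ (m + 1)),
              sSup (f '' Set.Icc (P.x m) (P.x (m + 1))) * (W (Q.x (j + 1)) - W (Q.x j)) :=
              Finset.sum_le_sum step
          _ = sSup (f '' Set.Icc (P.x m) (P.x (m + 1))) *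
              ∑ j ∈ Finset.Ico (σ m) (σ (m + 1)), (W (Q.x (j + 1)) - W (Q.x j)) := by
              rw [Finset.mul_sum]
          _ = sSup (f '' Set.Icc (P.x m) (P.x (m + 1))) *
              (W (Q.x (σ (m + 1))) - W (Q.x (σ m))) := by
              rw [sum_Ico_tele (fun j => W (Q.x j)) hle]
          _ = sSup (f '' Set.Icc (P.x m) (P.x (m + 1))) * (W (P.x (m + 1)) - W (P.x m)) := by
              rw [hσx m hmle, hσx (m + 1) hm]
      rw [hsplit, Finset.sum_range_succ]
      exact add_le_add (ih hmle) hico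
  have hfin := key P.n le_rfl
  rw [hσN] at hfin
  exact hfin

theorem lowerSum_eq_neg {a b : ℝ} (f W : ℝ → ℝ) (P : RSPartition a b) :
    lowerSum f W P = -upperSum (fun x => -f x) W P := by
  rw [lowerSum, upperSum, ← Finset.sum_neg_distrib]
  apply Finset.sum_congr rfl
  intro k _
  have himg : (fun x => -f x) '' Set.Icc (P.x k) (P.x (k + 1))
      = -(f '' Set.Icc (P.x k) (P.x (k + 1))) := by
    ext y
    simp only [Set.mem_image, Set.mem_neg]
    constructor
    · rintro ⟨x, hx, rfl⟩; exact ⟨x, hx, by ring⟩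
    · rintro ⟨x, hx, hxy⟩; exact ⟨x, hx, by linarith⟩
  rw [himg, Real.sInf_def]
  ring

theorem lowerSum_refine {a b : ℝ} {f W : ℝ → ℝ} (hW : MonotoneOn W (Set.Icc a b))
    {B : ℝ} (hfB : ∀ x ∈ Set.Icc a b, B ≤ f x)
    (P Q : RSPartition a b)
    (hPQ : ∀ i ≤ P.n, ∃ j ≤ Q.n, Q.x j = P.x i) :
    lowerSum f W P ≤ lowerSum f W Q := by
  rw [lowerSum_eq_neg, lowerSum_eq_neg]
  have h := upperSum_refine (f := fun x => -f x) (W := W) hW (B := -B)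
    (fun x hx => by have := hfB x hx; simp only [neg_le_neg_iff]; linarith) P Q hPQ
  linarith


theorem exists_partition_of_finset {a b : ℝ} (hab : a < b) (S : Finset ℝ) (ha : a ∈ S)
    (hb : b ∈ S) (hS : ∀ y ∈ S, y ∈ Set.Icc a b) :
    ∃ P : RSPartition a b, ∀ y ∈ S, ∃ j ≤ P.n, P.x j = y := by
  classical
  set l := S.sort (· ≤ ·) with hl
  have hlen : l.length = S.card := Finset.length_sort _
  have hcard : 1 < S.card := Finset.one_lt_card.mpr ⟨a, ha, b, hb, ne_of_lt hab⟩
  have hlt : l.Pairwise (· < ·) := (Finset.sortedLT_sort S).pairwise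
  have hlpos : 1 < l.length := by omega
  have hmem : ∀ y : ℝ, y ∈ l ↔ y ∈ S := fun y => Finset.mem_sort _
  have hgetS : ∀ (i : ℕ) (hi : i < l.length), l[i] ∈ S := by
    intro i hi
    exact (hmem _).mp (List.getElem_mem hi)
  have hstrict : ∀ (i j : ℕ) (hi : i < l.length) (hj : j < l.length), i < j → l[i] < l[j] := by
    intro i j hi hj hij
    have := hlt.rel_get_of_lt (a := ⟨i, hi⟩) (b := ⟨j, hj⟩) (Fin.mk_lt_mk.mpr hij)
    simpa using this
  have hleel : ∀ (i j : ℕ) (hi : i < l.length) (hj : j < l.length), i ≤ j → l[i] ≤ l[j] := by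
    intro i j hi hj hij
    rcases eq_or_lt_of_le hij with h | h
    · subst h; exact le_rfl
    · exact le_of_lt (hstrict i j hi hj h)
  have hleft : l.getD 0 b = a := by
    obtain ⟨k, hk, hka⟩ := List.getElem_of_mem ((hmem a).mpr ha)
    rw [List.getD_eq_getElem _ _ (by omega : 0 < l.length)]
    refine le_antisymm ?_ (hS _ (hgetS 0 (by omega))).1
    rw [← hka]
    exact hleel 0 k (by omega) hk (Nat.zero_le k)
  have hright : l.getD (l.length - 1) b = b := by
    obtain ⟨k, hk, hkb⟩ := List.getElem_of_mem ((hmem b).mpr hb)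
    rw [List.getD_eq_getElem _ _ (by omega : l.length - 1 < l.length)]
    refine le_antisymm (hS _ (hgetS _ (by omega))).2 ?_
    rw [← hkb]
    exact hleel k (l.length - 1) hk (by omega) (by omega)
  refine ⟨⟨l.length - 1, by omega, fun i => l.getD i b, ?_, hleft, hright⟩, ?_⟩
  · intro i hi
    show l.getD i b < l.getD (i + 1) b
    rw [List.getD_eq_getElem _ _ (by omega : i < l.length),
      List.getD_eq_getElem _ _ (by omega : i + 1 < l.length)]
    exact hstrict i (i + 1) (by omega) (by omega) (by omega)
  · intro y hy
    obtain ⟨k, hk, hky⟩ := List.getElem_of_mem ((hmem y).mpr hy)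
    refine ⟨k, ?_, ?_⟩
    · show k ≤ l.length - 1
      omega
    show l.getD k b = y
    rw [List.getD_eq_getElem _ _ hk]
    exact hky


/-- cut points as a Finset -/
noncomputable def cutsF {a b : ℝ} (P : RSPartition a b) : Finset ℝ :=
  (Finset.range (P.n + 1)).image P.x

theorem mem_cutsF {a b : ℝ} (P : RSPartition a b) {i : ℕ} (hi : i ≤ P.n) : P.x i ∈ cutsF P :=
  Finset.mem_image.mpr ⟨i, Finset.mem_range.mpr (by omega), rfl⟩

theorem cutsF_subset_Icc {a b : ℝ} (P : RSPartition a b) : ∀ y ∈ cutsF P, y ∈ Set.Icc a b := by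
  intro y hy
  obtain ⟨i, hi, rfl⟩ := Finset.mem_image.mp hy
  exact P.x_mem (by simpa using Nat.lt_succ_iff.mp (Finset.mem_range.mp hi))

theorem a_mem_cutsF {a b : ℝ} (P : RSPartition a b) : a ∈ cutsF P := by
  have h := mem_cutsF P (Nat.zero_le P.n)
  rwa [P.left] at h

theorem b_mem_cutsF {a b : ℝ} (P : RSPartition a b) : b ∈ cutsF P := by
  have h := mem_cutsF P (le_refl P.n)
  rwa [P.right] at h

/-- common refinement of three partitions -/
theorem exists_refinement3 {a b : ℝ} (hab : a < b) (P1 P2 P3 : RSPartition a b) :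
    ∃ R : RSPartition a b,
      (∀ i ≤ P1.n, ∃ j ≤ R.n, R.x j = P1.x i) ∧
      (∀ i ≤ P2.n, ∃ j ≤ R.n, R.x j = P2.x i) ∧
      (∀ i ≤ P3.n, ∃ j ≤ R.n, R.x j = P3.x i) := by
  classical
  set S : Finset ℝ := cutsF P1 ∪ cutsF P2 ∪ cutsF P3 with hSdef
  have hS : ∀ y ∈ S, y ∈ Set.Icc a b := by
    intro y hy
    rcases Finset.mem_union.mp hy with hy | hy
    · rcases Finset.mem_union.mp hy with hy | hy
      · exact cutsF_subset_Icc P1 y hy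
      · exact cutsF_subset_Icc P2 y hy
    · exact cutsF_subset_Icc P3 y hy
  have ha : a ∈ S := by
    refine Finset.mem_union.mpr (Or.inl (Finset.mem_union.mpr (Or.inl (a_mem_cutsF P1))))
  have hb : b ∈ S := by
    refine Finset.mem_union.mpr (Or.inl (Finset.mem_union.mpr (Or.inl (b_mem_cutsF P1))))
  obtain ⟨R, hR⟩ := exists_partition_of_finset hab S ha hb hS
  refine ⟨R, ?_, ?_, ?_⟩
  · intro i hi
    exact hR _ (Finset.mem_union.mpr (Or.inl (Finset.mem_union.mpr (Or.inl (mem_cutsF P1 hi)))))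
  · intro i hi
    exact hR _ (Finset.mem_union.mpr (Or.inl (Finset.mem_union.mpr (Or.inr (mem_cutsF P2 hi)))))
  · intro i hi
    exact hR _ (Finset.mem_union.mpr (Or.inr (mem_cutsF P3 hi)))

theorem upperSum_ge {a b : ℝ} {f : ℝ → ℝ} {c B : ℝ}
    (hc : ∀ x ∈ Set.Icc a b, c ≤ f x) (hB : ∀ x ∈ Set.Icc a b, f x ≤ B)
    (P : RSPartition a b) : c * (b - a) ≤ upperSum f id P := by
  have hterm : ∀ k ∈ Finset.range P.n,
      c * (P.x (k + 1) - P.x k)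
      ≤ sSup (f '' Set.Icc (P.x k) (P.x (k + 1))) * (id (P.x (k + 1)) - id (P.x k)) := by
    intro k hk
    rw [Finset.mem_range] at hk
    have hk1 : k + 1 ≤ P.n := hk
    have hxk : P.x k < P.x (k + 1) := P.x_lt_x (by omega) hk1
    have hsub : Set.Icc (P.x k) (P.x (k + 1)) ⊆ Set.Icc a b :=
      Set.Icc_subset_Icc (P.x_mem (by omega : k ≤ P.n)).1 (P.x_mem hk1).2
    have hcs : c ≤ sSup (f '' Set.Icc (P.x k) (P.x (k + 1))) := by
      refine le_trans (hc _ (hsub (Set.left_mem_Icc.mpr (le_of_lt hxk)))) ?_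
      exact le_csSup (bddAbove_image_of_le hB hsub)
        (Set.mem_image_of_mem f (Set.left_mem_Icc.mpr (le_of_lt hxk)))
    simp only [id_eq]
    exact mul_le_mul_of_nonneg_right hcs (by linarith)
  calc c * (b - a) = ∑ k ∈ Finset.range P.n, c * (P.x (k + 1) - P.x k) := by
        rw [← Finset.mul_sum, Finset.sum_range_sub (fun k => P.x k), P.left, P.right]
    _ ≤ upperSum f id P := Finset.sum_le_sum hterm

theorem bddBelow_upperSums {a b : ℝ} {f : ℝ → ℝ} {c B : ℝ}
    (hc : ∀ x ∈ Set.Icc a b, c ≤ f x) (hB : ∀ x ∈ Set.Icc a b, f x ≤ B) :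
    BddBelow (Set.range fun P : RSPartition a b => upperSum f id P) := by
  refine ⟨c * (b - a), ?_⟩
  rintro y ⟨P, rfl⟩
  exact upperSum_ge hc hB P

theorem le_upperInt {a b : ℝ} (hab : a < b) {f : ℝ → ℝ} {c B : ℝ}
    (hc : ∀ x ∈ Set.Icc a b, c ≤ f x) (hB : ∀ x ∈ Set.Icc a b, f x ≤ B) :
    c * (b - a) ≤ upperInt f id a b := by
  haveI := nonempty_partition hab
  exact le_ciInf fun P => upperSum_ge hc hB P

theorem upperInt_le_single {a b : ℝ} (hab : a < b) {f : ℝ → ℝ} {c B : ℝ}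
    (hc : ∀ x ∈ Set.Icc a b, c ≤ f x) (hB : ∀ x ∈ Set.Icc a b, f x ≤ B) :
    upperInt f id a b ≤ sSup (f '' Set.Icc a b) * (b - a) := by
  refine le_trans (ciInf_le (bddBelow_upperSums hc hB) (RSPartition.single hab)) ?_
  rw [upperSum]
  simp [RSPartition.single]


theorem upperSum_split {a v : ℝ} (f W : ℝ → ℝ) (R : RSPartition a v) {j : ℕ}
    (h0 : 0 < j) (hj : j < R.n) :
    ∃ (R1 : RSPartition a (R.x j)) (R2 : RSPartition (R.x j) v),
      R1.n = j ∧ R1.x = R.x ∧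
      upperSum f W R = upperSum f W R1 + upperSum f W R2 := by
  refine ⟨⟨j, h0, R.x, fun i hi => R.mono i (by omega), R.left, rfl⟩,
    ⟨R.n - j, by omega, fun i => R.x (j + i), fun i hi => R.mono (j + i) (by omega),
      by simp, by have h : j + (R.n - j) = R.n := by omega
                  simp only [h, R.right]⟩, rfl, rfl, ?_⟩
  rw [upperSum, upperSum, upperSum]
  simp only
  rw [Finset.range_eq_Ico, ← Finset.sum_Ico_consecutive _ (Nat.zero_le j) (le_of_lt hj),
    ← Finset.range_eq_Ico, Finset.sum_Ico_eq_sum_range]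
  congr 1

theorem upperSum_extend {a u v : ℝ} (f W : ℝ → ℝ) (hau : a < u) (huv : u < v)
    (P : RSPartition a u) :
    ∃ Q : RSPartition a v,
      upperSum f W Q = upperSum f W P + sSup (f '' Set.Icc u v) * (W v - W u) := by
  refine ⟨⟨P.n + 1, by omega, fun i => if i ≤ P.n then P.x i else v, ?_, ?_, ?_⟩, ?_⟩
  · intro i hi
    by_cases h : i < P.n
    · simp only [if_pos (by omega : i ≤ P.n), if_pos (by omega : i + 1 ≤ P.n)]
      exact P.mono i h
    · have hi' : i = P.n := by omega
      subst hi'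
      simp only [if_pos (le_refl P.n), if_neg (by omega : ¬ P.n + 1 ≤ P.n)]
      rw [P.right]
      exact huv
  · simp only [if_pos (Nat.zero_le P.n)]
    exact P.left
  · simp only [if_neg (by omega : ¬ P.n + 1 ≤ P.n)]
  · rw [upperSum, upperSum]
    simp only
    rw [Finset.sum_range_succ]
    congr 1
    · apply Finset.sum_congr rfl
      intro k hk
      rw [Finset.mem_range] at hk
      rw [if_pos (by omega : k ≤ P.n), if_pos (by omega : k + 1 ≤ P.n)]
    · rw [if_pos (le_refl P.n), if_neg (by omega : ¬ P.n + 1 ≤ P.n), P.right]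


theorem RIntegral_eq_upperInt (f : ℝ → ℝ) (a b : ℝ) : RIntegral f a b = upperInt f id a b := rfl

theorem deltaPsi_bounds {a b : ℝ} {ψ : ℝ → ℝ} {Mb : ℝ}
    (hψ0 : ∀ x ∈ Set.Icc a b, 0 ≤ ψ x) (hψM : ∀ x ∈ Set.Icc a b, ψ x ≤ Mb)
    {u v : ℝ} (hau : a ≤ u) (huv : u < v) (hvb : v ≤ b) :
    sInf (ψ '' Set.Icc u v) * (v - u) ≤ RIntegral ψ a v - RIntegral ψ a u ∧
      RIntegral ψ a v - RIntegral ψ a u ≤ sSup (ψ '' Set.Icc u v) * (v - u) := by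
  have hψ0v : ∀ x ∈ Set.Icc a v, 0 ≤ ψ x := fun x hx =>
    hψ0 x (Set.Icc_subset_Icc le_rfl hvb hx)
  have hψMv : ∀ x ∈ Set.Icc a v, ψ x ≤ Mb := fun x hx =>
    hψM x (Set.Icc_subset_Icc le_rfl hvb hx)
  have hψ0uv : ∀ x ∈ Set.Icc u v, 0 ≤ ψ x := fun x hx =>
    hψ0 x (Set.Icc_subset_Icc hau hvb hx)
  have hψMuv : ∀ x ∈ Set.Icc u v, ψ x ≤ Mb := fun x hx =>
    hψM x (Set.Icc_subset_Icc hau hvb hx)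
  have hsInf_le : ∀ x ∈ Set.Icc u v, sInf (ψ '' Set.Icc u v) ≤ ψ x := fun x hx =>
    csInf_le (bddBelow_image_of_le hψ0uv Set.Subset.rfl) (Set.mem_image_of_mem ψ hx)
  have hle_sSup : ∀ x ∈ Set.Icc u v, ψ x ≤ sSup (ψ '' Set.Icc u v) := fun x hx =>
    le_csSup (bddAbove_image_of_le hψMuv Set.Subset.rfl) (Set.mem_image_of_mem ψ hx)
  rw [RIntegral_eq_upperInt, RIntegral_eq_upperInt]
  rcases eq_or_lt_of_le hau with heq | hau'
  · subst heq
    rw [upperInt_of_le (le_refl a)]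
    constructor
    · have := le_upperInt huv hsInf_le hψMuv
      linarith
    · have := upperInt_le_single huv hψ0uv hψMuv
      linarith
  · constructor
    · -- lower bound: upperInt a u + sInf * (v - u) ≤ upperInt a v
      haveI := nonempty_partition (lt_trans hau' huv)
      have key : ∀ R : RSPartition a v,
          upperInt ψ id a u + sInf (ψ '' Set.Icc u v) * (v - u) ≤ upperSum ψ id R := by
        intro R
        classical
        have haS : a ∈ cutsF R ∪ {u} := Finset.mem_union.mpr (Or.inl (a_mem_cutsF R))
        have hvS : v ∈ cutsF R ∪ {u} := Finset.mem_union.mpr (Or.inl (b_mem_cutsF R))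
        have hSIcc : ∀ y ∈ cutsF R ∪ {u}, y ∈ Set.Icc a v := by
          intro y hy
          rcases Finset.mem_union.mp hy with hy | hy
          · exact cutsF_subset_Icc R y hy
          · rw [Finset.mem_singleton] at hy
            subst hy
            exact ⟨le_of_lt hau', le_of_lt huv⟩
        obtain ⟨R', hR'⟩ := exists_partition_of_finset (lt_trans hau' huv) _ haS hvS hSIcc
        have hrefines : ∀ i ≤ R.n, ∃ j ≤ R'.n, R'.x j = R.x i := fun i hi =>
          hR' _ (Finset.mem_union.mpr (Or.inl (mem_cutsF R hi)))
        have h2 : upperSum ψ id R' ≤ upperSum ψ id R :=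
          upperSum_refine (fun _ _ _ _ h => h) hψMv R R' hrefines
        obtain ⟨j, hj, hju⟩ := hR' u (Finset.mem_union.mpr (Or.inr (Finset.mem_singleton_self u)))
        have h0j : 0 < j := by
          rcases Nat.eq_zero_or_pos j with h | h
          · exfalso; subst h; rw [R'.left] at hju; linarith [hju ▸ hau']
          · exact h
        have hjn : j < R'.n := by
          rcases eq_or_lt_of_le hj with h | h
          · exfalso; subst h; rw [R'.right] at hju; linarith [hju ▸ huv]
          · exact h
        subst hju
        obtain ⟨R1, R2, hn1, hx1, hsum⟩ := upperSum_split ψ id R' h0j hjn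
        have hxjb : R'.x j ∈ Set.Icc a v := R'.x_mem (le_of_lt hjn)
        have h3 : upperInt ψ id a (R'.x j) ≤ upperSum ψ id R1 :=
          ciInf_le (bddBelow_upperSums (c := 0) (B := Mb)
            (fun x hx => hψ0v x (Set.Icc_subset_Icc le_rfl hxjb.2 hx))
            (fun x hx => hψMv x (Set.Icc_subset_Icc le_rfl hxjb.2 hx))) R1
        have h4 : sInf (ψ '' Set.Icc (R'.x j) v) * (v - R'.x j) ≤ upperSum ψ id R2 :=
          upperSum_ge hsInf_le hψMuv R2
        linarith
      have hfin : upperInt ψ id a u + sInf (ψ '' Set.Icc u v) * (v - u)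
          ≤ upperInt ψ id a v := le_ciInf key
      linarith
    · -- upper bound: upperInt a v ≤ upperInt a u + sSup * (v - u)
      haveI := nonempty_partition hau'
      have key : ∀ P : RSPartition a u,
          upperInt ψ id a v - sSup (ψ '' Set.Icc u v) * (v - u) ≤ upperSum ψ id P := by
        intro P
        obtain ⟨Q, hQ⟩ := upperSum_extend ψ id hau' huv P
        have h1 : upperInt ψ id a v ≤ upperSum ψ id Q :=
          ciInf_le (bddBelow_upperSums hψ0v hψMv) Q
        rw [hQ] at h1
        simp only [id_eq] at h1
        linarith
      have hfin : upperInt ψ id a v - sSup (ψ '' Set.Icc u v) * (v - u)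
          ≤ upperInt ψ id a u := le_ciInf key
      linarith


theorem le_of_forall_pos_le_add' {x y : ℝ} (h : ∀ ε : ℝ, 0 < ε → x ≤ y + ε) : x ≤ y := by
  by_contra hc
  push_neg at hc
  have := h ((x - y) / 2) (by linarith)
  linarith

section Claims

variable {u v B Mb D : ℝ} {f ψ : ℝ → ℝ}

theorem claimA (huv : u < v) (hB0 : 0 ≤ B)
    (hfB : ∀ x ∈ Set.Icc u v, |f x| ≤ B)
    (hψ0 : ∀ x ∈ Set.Icc u v, 0 ≤ ψ x) (hψM : ∀ x ∈ Set.Icc u v, ψ x ≤ Mb)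
    (hD1 : sInf (ψ '' Set.Icc u v) * (v - u) ≤ D)
    (hD2 : D ≤ sSup (ψ '' Set.Icc u v) * (v - u)) :
    sSup ((fun x => f x * ψ x) '' Set.Icc u v) * (v - u) ≤ sSup (f '' Set.Icc u v) * D
      + B * ((sSup (ψ '' Set.Icc u v) - sInf (ψ '' Set.Icc u v)) * (v - u)) := by
  have hvu : (0 : ℝ) < v - u := by linarith
  have hm0 : 0 ≤ sInf (ψ '' Set.Icc u v) := by
    apply Real.sInf_nonneg
    rintro y ⟨x, hx, rfl⟩
    exact hψ0 x hx
  have hD0 : 0 ≤ D := le_trans (by nlinarith) hD1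
  have hbddf : BddAbove (f '' Set.Icc u v) :=
    bddAbove_image_of_le (fun x hx => le_trans (le_abs_self _) (hfB x hx)) Set.Subset.rfl
  have key : ∀ x ∈ Set.Icc u v, f x * ψ x * (v - u) ≤ sSup (f '' Set.Icc u v) * D
      + B * ((sSup (ψ '' Set.Icc u v) - sInf (ψ '' Set.Icc u v)) * (v - u)) := by
    intro x hx
    have hfx : f x ≤ sSup (f '' Set.Icc u v) := le_csSup hbddf (Set.mem_image_of_mem f hx)
    have h1 : f x * D ≤ sSup (f '' Set.Icc u v) * D := mul_le_mul_of_nonneg_right hfx hD0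
    have hψa : sInf (ψ '' Set.Icc u v) * (v - u) ≤ ψ x * (v - u) :=
      mul_le_mul_of_nonneg_right
        (csInf_le (bddBelow_image_of_le hψ0 Set.Subset.rfl) (Set.mem_image_of_mem ψ hx))
        (le_of_lt hvu)
    have hψb : ψ x * (v - u) ≤ sSup (ψ '' Set.Icc u v) * (v - u) :=
      mul_le_mul_of_nonneg_right
        (le_csSup (bddAbove_image_of_le hψM Set.Subset.rfl) (Set.mem_image_of_mem ψ hx))
        (le_of_lt hvu)
    have h2 : f x * (ψ x * (v - u) - D)
        ≤ B * ((sSup (ψ '' Set.Icc u v) - sInf (ψ '' Set.Icc u v)) * (v - u)) := by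
      calc f x * (ψ x * (v - u) - D) ≤ |f x * (ψ x * (v - u) - D)| := le_abs_self _
        _ = |f x| * |ψ x * (v - u) - D| := abs_mul _ _
        _ ≤ B * ((sSup (ψ '' Set.Icc u v) - sInf (ψ '' Set.Icc u v)) * (v - u)) := by
            apply mul_le_mul (hfB x hx) (abs_le.mpr ⟨by linarith, by linarith⟩)
              (abs_nonneg _) hB0
    nlinarith [h1, h2]
  have hS : sSup ((fun x => f x * ψ x) '' Set.Icc u v)
      ≤ (sSup (f '' Set.Icc u v) * D
        + B * ((sSup (ψ '' Set.Icc u v) - sInf (ψ '' Set.Icc u v)) * (v - u))) / (v - u) := by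
    apply csSup_le (image_Icc_nonempty (le_of_lt huv))
    rintro y ⟨x, hx, rfl⟩
    rw [le_div_iff₀ hvu]
    exact key x hx
  calc sSup ((fun x => f x * ψ x) '' Set.Icc u v) * (v - u)
      ≤ ((sSup (f '' Set.Icc u v) * D
        + B * ((sSup (ψ '' Set.Icc u v) - sInf (ψ '' Set.Icc u v)) * (v - u))) / (v - u))
        * (v - u) := mul_le_mul_of_nonneg_right hS (le_of_lt hvu)
    _ = _ := by field_simp

theorem claimB (huv : u < v) (hB0 : 0 ≤ B)
    (hfB : ∀ x ∈ Set.Icc u v, |f x| ≤ B)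
    (hψ0 : ∀ x ∈ Set.Icc u v, 0 ≤ ψ x) (hψM : ∀ x ∈ Set.Icc u v, ψ x ≤ Mb)
    (hD1 : sInf (ψ '' Set.Icc u v) * (v - u) ≤ D)
    (hD2 : D ≤ sSup (ψ '' Set.Icc u v) * (v - u)) :
    sSup (f '' Set.Icc u v) * D ≤ sSup ((fun x => f x * ψ x) '' Set.Icc u v) * (v - u)
      + B * ((sSup (ψ '' Set.Icc u v) - sInf (ψ '' Set.Icc u v)) * (v - u)) := by
  have hvu : (0 : ℝ) < v - u := by linarith
  have hm0 : 0 ≤ sInf (ψ '' Set.Icc u v) := by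
    apply Real.sInf_nonneg
    rintro y ⟨x, hx, rfl⟩
    exact hψ0 x hx
  have hD0 : 0 ≤ D := le_trans (by nlinarith) hD1
  have hMb0 : 0 ≤ Mb := le_trans (hψ0 u (Set.left_mem_Icc.mpr (le_of_lt huv)))
    (hψM u (Set.left_mem_Icc.mpr (le_of_lt huv)))
  have hbddfψ : BddAbove ((fun x => f x * ψ x) '' Set.Icc u v) := by
    refine bddAbove_image_of_le (B := B * Mb) ?_ Set.Subset.rfl
    intro x hx
    calc f x * ψ x ≤ |f x * ψ x| := le_abs_self _
      _ = |f x| * |ψ x| := abs_mul _ _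
      _ ≤ B * Mb := mul_le_mul (hfB x hx) (by rw [abs_of_nonneg (hψ0 x hx)]; exact hψM x hx)
          (abs_nonneg _) hB0
  apply le_of_forall_pos_le_add'
  intro ε hε
  have hε' : 0 < ε / (D + 1) := by positivity
  obtain ⟨y, hy, hlt⟩ := exists_lt_of_lt_csSup (image_Icc_nonempty (le_of_lt huv))
    (show sSup (f '' Set.Icc u v) - ε / (D + 1) < sSup (f '' Set.Icc u v) by linarith)
  obtain ⟨x, hx, rfl⟩ := hy
  have h1 : sSup (f '' Set.Icc u v) * D ≤ (f x + ε / (D + 1)) * D :=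
    mul_le_mul_of_nonneg_right (by linarith) hD0
  have hψa : sInf (ψ '' Set.Icc u v) * (v - u) ≤ ψ x * (v - u) :=
    mul_le_mul_of_nonneg_right
      (csInf_le (bddBelow_image_of_le hψ0 Set.Subset.rfl) (Set.mem_image_of_mem ψ hx))
      (le_of_lt hvu)
  have hψb : ψ x * (v - u) ≤ sSup (ψ '' Set.Icc u v) * (v - u) :=
    mul_le_mul_of_nonneg_right
      (le_csSup (bddAbove_image_of_le hψM Set.Subset.rfl) (Set.mem_image_of_mem ψ hx))
      (le_of_lt hvu)
  have h2 : f x * (D - ψ x * (v - u))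
      ≤ B * ((sSup (ψ '' Set.Icc u v) - sInf (ψ '' Set.Icc u v)) * (v - u)) := by
    calc f x * (D - ψ x * (v - u)) ≤ |f x * (D - ψ x * (v - u))| := le_abs_self _
      _ = |f x| * |D - ψ x * (v - u)| := abs_mul _ _
      _ ≤ B * ((sSup (ψ '' Set.Icc u v) - sInf (ψ '' Set.Icc u v)) * (v - u)) := by
          apply mul_le_mul (hfB x hx) (abs_le.mpr ⟨by linarith, by linarith⟩)
            (abs_nonneg _) hB0
  have h3 : f x * ψ x * (v - u) ≤ sSup ((fun x => f x * ψ x) '' Set.Icc u v) * (v - u) :=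
    mul_le_mul_of_nonneg_right
      (le_csSup hbddfψ (Set.mem_image_of_mem (fun x => f x * ψ x) hx)) (le_of_lt hvu)
  have h4 : ε / (D + 1) * D ≤ ε := by
    rw [div_mul_eq_mul_div, div_le_iff₀ (by linarith : (0:ℝ) < D + 1)]
    nlinarith
  nlinarith [h1, h2, h3, h4]

end Claims


section Main

variable {a b B Mb : ℝ} {f ψ Ψ : ℝ → ℝ}

theorem psi_mono (hψ0 : ∀ x ∈ Set.Icc a b, 0 ≤ ψ x) (hψM : ∀ x ∈ Set.Icc a b, ψ x ≤ Mb)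
    (hΨ : ∀ x ∈ Set.Icc a b, Ψ x = Ψ a + RIntegral ψ a x) :
    MonotoneOn Ψ (Set.Icc a b) := by
  intro p hp q hq hpq
  rcases eq_or_lt_of_le hpq with h | h
  · subst h; exact le_rfl
  · have hD := (deltaPsi_bounds hψ0 hψM hp.1 h hq.2).1
    have hm0 : 0 ≤ sInf (ψ '' Set.Icc p q) := by
      apply Real.sInf_nonneg
      rintro y ⟨x, hx, rfl⟩
      exact hψ0 x (Set.Icc_subset_Icc hp.1 hq.2 hx)
    have h1 : Ψ q - Ψ p = RIntegral ψ a q - RIntegral ψ a p := by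
      rw [hΨ _ hq, hΨ _ hp]; ring
    nlinarith

theorem upperSum_geΨ (hΨmono : MonotoneOn Ψ (Set.Icc a b)) {c : ℝ}
    (hc : ∀ x ∈ Set.Icc a b, c ≤ f x) (hB : ∀ x ∈ Set.Icc a b, f x ≤ B)
    (P : RSPartition a b) : c * (Ψ b - Ψ a) ≤ upperSum f Ψ P := by
  have hterm : ∀ k ∈ Finset.range P.n,
      c * (Ψ (P.x (k + 1)) - Ψ (P.x k))
      ≤ sSup (f '' Set.Icc (P.x k) (P.x (k + 1))) * (Ψ (P.x (k + 1)) - Ψ (P.x k)) := by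
    intro k hk
    rw [Finset.mem_range] at hk
    have hk1 : k + 1 ≤ P.n := hk
    have hxk : P.x k < P.x (k + 1) := P.x_lt_x (by omega) hk1
    have hmu := P.x_mem (show k ≤ P.n by omega)
    have hmv := P.x_mem hk1
    have hsub : Set.Icc (P.x k) (P.x (k + 1)) ⊆ Set.Icc a b := Set.Icc_subset_Icc hmu.1 hmv.2
    have hcs : c ≤ sSup (f '' Set.Icc (P.x k) (P.x (k + 1))) := by
      refine le_trans (hc _ (hsub (Set.left_mem_Icc.mpr (le_of_lt hxk)))) ?_
      exact le_csSup (bddAbove_image_of_le hB hsub)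
        (Set.mem_image_of_mem f (Set.left_mem_Icc.mpr (le_of_lt hxk)))
    have hΔ : 0 ≤ Ψ (P.x (k + 1)) - Ψ (P.x k) := by
      have := hΨmono hmu hmv (le_of_lt hxk)
      linarith
    exact mul_le_mul_of_nonneg_right hcs hΔ
  calc c * (Ψ b - Ψ a) = ∑ k ∈ Finset.range P.n, c * (Ψ (P.x (k + 1)) - Ψ (P.x k)) := by
        rw [← Finset.mul_sum, Finset.sum_range_sub (fun k => Ψ (P.x k)), P.left, P.right]
    _ ≤ upperSum f Ψ P := Finset.sum_le_sum hterm

theorem bddBelow_upperSumsΨ (hΨmono : MonotoneOn Ψ (Set.Icc a b)) {c : ℝ}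
    (hc : ∀ x ∈ Set.Icc a b, c ≤ f x) (hB : ∀ x ∈ Set.Icc a b, f x ≤ B) :
    BddBelow (Set.range fun P : RSPartition a b => upperSum f Ψ P) := by
  refine ⟨c * (Ψ b - Ψ a), ?_⟩
  rintro y ⟨P, rfl⟩
  exact upperSum_geΨ hΨmono hc hB P

theorem estimates (hB0 : 0 ≤ B)
    (hfB : ∀ x ∈ Set.Icc a b, |f x| ≤ B)
    (hψ0 : ∀ x ∈ Set.Icc a b, 0 ≤ ψ x) (hψM : ∀ x ∈ Set.Icc a b, ψ x ≤ Mb)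
    (hΨ : ∀ x ∈ Set.Icc a b, Ψ x = Ψ a + RIntegral ψ a x)
    (P : RSPartition a b) :
    upperSum f Ψ P ≤ upperSum (fun x => f x * ψ x) id P
        + B * (upperSum ψ id P - lowerSum ψ id P) ∧
    upperSum (fun x => f x * ψ x) id P ≤ upperSum f Ψ P
        + B * (upperSum ψ id P - lowerSum ψ id P) := by
  have hterm : ∀ k ∈ Finset.range P.n,
      (sSup (f '' Set.Icc (P.x k) (P.x (k + 1))) * (Ψ (P.x (k + 1)) - Ψ (P.x k))
      ≤ sSup ((fun x => f x * ψ x) '' Set.Icc (P.x k) (P.x (k + 1))) * (P.x (k + 1) - P.x k)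
        + B * ((sSup (ψ '' Set.Icc (P.x k) (P.x (k + 1)))
          - sInf (ψ '' Set.Icc (P.x k) (P.x (k + 1)))) * (P.x (k + 1) - P.x k)))
      ∧ (sSup ((fun x => f x * ψ x) '' Set.Icc (P.x k) (P.x (k + 1))) * (P.x (k + 1) - P.x k)
      ≤ sSup (f '' Set.Icc (P.x k) (P.x (k + 1))) * (Ψ (P.x (k + 1)) - Ψ (P.x k))
        + B * ((sSup (ψ '' Set.Icc (P.x k) (P.x (k + 1)))
          - sInf (ψ '' Set.Icc (P.x k) (P.x (k + 1)))) * (P.x (k + 1) - P.x k))) := by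
    intro k hk
    rw [Finset.mem_range] at hk
    have hk1 : k + 1 ≤ P.n := hk
    have huv : P.x k < P.x (k + 1) := P.x_lt_x (by omega) hk1
    have hmu := P.x_mem (show k ≤ P.n by omega)
    have hmv := P.x_mem hk1
    have hsub : Set.Icc (P.x k) (P.x (k + 1)) ⊆ Set.Icc a b := Set.Icc_subset_Icc hmu.1 hmv.2
    have hD : Ψ (P.x (k + 1)) - Ψ (P.x k)
        = RIntegral ψ a (P.x (k + 1)) - RIntegral ψ a (P.x k) := by
      rw [hΨ _ hmv, hΨ _ hmu]; ring
    obtain ⟨hD1, hD2⟩ := deltaPsi_bounds hψ0 hψM hmu.1 huv hmv.2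
    rw [hD]
    exact ⟨claimB huv hB0 (fun x hx => hfB x (hsub hx)) (fun x hx => hψ0 x (hsub hx))
        (fun x hx => hψM x (hsub hx)) (Mb := Mb) hD1 hD2,
      claimA huv hB0 (fun x hx => hfB x (hsub hx)) (fun x hx => hψ0 x (hsub hx))
        (fun x hx => hψM x (hsub hx)) (Mb := Mb) hD1 hD2⟩
  have hsumid : (∑ k ∈ Finset.range P.n,
        (sSup ((fun x => f x * ψ x) '' Set.Icc (P.x k) (P.x (k + 1))) * (P.x (k + 1) - P.x k)
        + B * ((sSup (ψ '' Set.Icc (P.x k) (P.x (k + 1)))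
          - sInf (ψ '' Set.Icc (P.x k) (P.x (k + 1)))) * (P.x (k + 1) - P.x k))))
      = upperSum (fun x => f x * ψ x) id P + B * (upperSum ψ id P - lowerSum ψ id P) := by
    simp only [upperSum, lowerSum, id_eq]
    rw [Finset.sum_add_distrib, ← Finset.mul_sum, ← Finset.sum_sub_distrib]
    congr 1
    congr 1
    apply Finset.sum_congr rfl
    intro k _
    ring
  constructor
  · calc upperSum f Ψ P ≤ _ := Finset.sum_le_sum (fun k hk => (hterm k hk).1)
      _ = _ := hsumid
  · have h1 : upperSum (fun x => f x * ψ x) id P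
        = ∑ k ∈ Finset.range P.n,
          sSup ((fun x => f x * ψ x) '' Set.Icc (P.x k) (P.x (k + 1)))
            * (P.x (k + 1) - P.x k) := by
      simp only [upperSum, lowerSum, id_eq]
    rw [h1]
    have h2 : (∑ k ∈ Finset.range P.n,
        (sSup (f '' Set.Icc (P.x k) (P.x (k + 1))) * (Ψ (P.x (k + 1)) - Ψ (P.x k))
        + B * ((sSup (ψ '' Set.Icc (P.x k) (P.x (k + 1)))
          - sInf (ψ '' Set.Icc (P.x k) (P.x (k + 1)))) * (P.x (k + 1) - P.x k))))
        = upperSum f Ψ P + B * (upperSum ψ id P - lowerSum ψ id P) := by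
      simp only [upperSum, lowerSum, id_eq]
      rw [Finset.sum_add_distrib, ← Finset.mul_sum, ← Finset.sum_sub_distrib]
      congr 1
      congr 1
      apply Finset.sum_congr rfl
      intro k _
      ring
    calc (∑ k ∈ Finset.range P.n,
          sSup ((fun x => f x * ψ x) '' Set.Icc (P.x k) (P.x (k + 1)))
            * (P.x (k + 1) - P.x k))
        ≤ _ := Finset.sum_le_sum (fun k hk => (hterm k hk).2)
      _ = _ := h2


theorem upperInt_eq_main (hab : a < b) (hB0 : 0 ≤ B)
    (hfB : ∀ x ∈ Set.Icc a b, |f x| ≤ B)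
    (hψ0 : ∀ x ∈ Set.Icc a b, 0 ≤ ψ x) (hψM : ∀ x ∈ Set.Icc a b, ψ x ≤ Mb)
    (hψint : RIntegrable ψ a b)
    (hΨ : ∀ x ∈ Set.Icc a b, Ψ x = Ψ a + RIntegral ψ a x) :
    upperInt f Ψ a b = upperInt (fun x => f x * ψ x) id a b := by
  haveI := nonempty_partition hab
  have hΨmono := psi_mono hψ0 hψM hΨ
  have haIcc : a ∈ Set.Icc a b := Set.left_mem_Icc.mpr (le_of_lt hab)
  have hMb0 : 0 ≤ Mb := le_trans (hψ0 a haIcc) (hψM a haIcc)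
  have hf_lo : ∀ x ∈ Set.Icc a b, -B ≤ f x := fun x hx => (abs_le.mp (hfB x hx)).1
  have hf_hi : ∀ x ∈ Set.Icc a b, f x ≤ B := fun x hx => (abs_le.mp (hfB x hx)).2
  have hfψ_abs : ∀ x ∈ Set.Icc a b, |f x * ψ x| ≤ B * Mb := by
    intro x hx
    rw [abs_mul]
    exact mul_le_mul (hfB x hx) (by rw [abs_of_nonneg (hψ0 x hx)]; exact hψM x hx)
      (abs_nonneg _) hB0
  have hfψ_lo : ∀ x ∈ Set.Icc a b, -(B * Mb) ≤ f x * ψ x := fun x hx =>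
    (abs_le.mp (hfψ_abs x hx)).1
  have hfψ_hi : ∀ x ∈ Set.Icc a b, f x * ψ x ≤ B * Mb := fun x hx =>
    (abs_le.mp (hfψ_abs x hx)).2
  have bdd1 : BddBelow (Set.range fun P : RSPartition a b => upperSum f Ψ P) :=
    bddBelow_upperSumsΨ hΨmono hf_lo hf_hi
  have bdd2 : BddBelow (Set.range fun P : RSPartition a b =>
      upperSum (fun x => f x * ψ x) id P) :=
    bddBelow_upperSums hfψ_lo hfψ_hi
  have hIψ : upperInt ψ id a b = lowerInt ψ id a b := hψint
  have hidmono : MonotoneOn (fun y : ℝ => y) (Set.Icc a b) := fun _ _ _ _ h => h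
  have hidmono' : MonotoneOn (id : ℝ → ℝ) (Set.Icc a b) := fun _ _ _ _ h => h
  apply le_antisymm
  · apply le_of_forall_pos_le_add'
    intro ε hε
    have hδ : 0 < ε / (4 * (B + 1)) := by positivity
    obtain ⟨P1, hP1⟩ := exists_lt_of_ciInf_lt
      (show upperInt (fun x => f x * ψ x) id a b
        < upperInt (fun x => f x * ψ x) id a b + ε / 2 by linarith)
    obtain ⟨P2, hP2⟩ := exists_lt_of_ciInf_lt
      (show upperInt ψ id a b < upperInt ψ id a b + ε / (4 * (B + 1)) by linarith)
    obtain ⟨P3, hP3⟩ := exists_lt_of_lt_ciSup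
      (show upperInt ψ id a b - ε / (4 * (B + 1)) < lowerInt ψ id a b by
        rw [← hIψ]; linarith)
    obtain ⟨R, hR1, hR2, hR3⟩ := exists_refinement3 hab P1 P2 P3
    have e1 := (estimates hB0 hfB hψ0 hψM hΨ R).1
    have r1 : upperSum (fun x => f x * ψ x) id R ≤ upperSum (fun x => f x * ψ x) id P1 :=
      upperSum_refine hidmono' hfψ_hi P1 R hR1
    have r2 : upperSum ψ id R ≤ upperSum ψ id P2 := upperSum_refine hidmono' hψM P2 R hR2
    have r3 : lowerSum ψ id P3 ≤ lowerSum ψ id R := lowerSum_refine hidmono' hψ0 P3 R hR3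
    have hUi : upperInt f Ψ a b ≤ upperSum f Ψ R := ciInf_le bdd1 R
    have hosc : upperSum ψ id R - lowerSum ψ id R ≤ 2 * (ε / (4 * (B + 1))) := by
      linarith
    have hB2 : B * (upperSum ψ id R - lowerSum ψ id R) ≤ B * (2 * (ε / (4 * (B + 1)))) :=
      mul_le_mul_of_nonneg_left hosc hB0
    have ht : ε / (4 * (B + 1)) * (4 * (B + 1)) = ε :=
      div_mul_cancel₀ _ (by positivity)
    have hδB : B * (2 * (ε / (4 * (B + 1)))) ≤ ε / 2 := by nlinarith
    linarith
  · apply le_of_forall_pos_le_add'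
    intro ε hε
    have hδ : 0 < ε / (4 * (B + 1)) := by positivity
    obtain ⟨P1, hP1⟩ := exists_lt_of_ciInf_lt
      (show upperInt f Ψ a b < upperInt f Ψ a b + ε / 2 by linarith)
    obtain ⟨P2, hP2⟩ := exists_lt_of_ciInf_lt
      (show upperInt ψ id a b < upperInt ψ id a b + ε / (4 * (B + 1)) by linarith)
    obtain ⟨P3, hP3⟩ := exists_lt_of_lt_ciSup
      (show upperInt ψ id a b - ε / (4 * (B + 1)) < lowerInt ψ id a b by
        rw [← hIψ]; linarith)
    obtain ⟨R, hR1, hR2, hR3⟩ := exists_refinement3 hab P1 P2 P3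
    have e2 := (estimates hB0 hfB hψ0 hψM hΨ R).2
    have r1 : upperSum f Ψ R ≤ upperSum f Ψ P1 := upperSum_refine hΨmono hf_hi P1 R hR1
    have r2 : upperSum ψ id R ≤ upperSum ψ id P2 := upperSum_refine hidmono' hψM P2 R hR2
    have r3 : lowerSum ψ id P3 ≤ lowerSum ψ id R := lowerSum_refine hidmono' hψ0 P3 R hR3
    have hUi : upperInt (fun x => f x * ψ x) id a b
        ≤ upperSum (fun x => f x * ψ x) id R := ciInf_le bdd2 R
    have hosc : upperSum ψ id R - lowerSum ψ id R ≤ 2 * (ε / (4 * (B + 1))) := by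
      linarith
    have hB2 : B * (upperSum ψ id R - lowerSum ψ id R) ≤ B * (2 * (ε / (4 * (B + 1)))) :=
      mul_le_mul_of_nonneg_left hosc hB0
    have ht : ε / (4 * (B + 1)) * (4 * (B + 1)) = ε :=
      div_mul_cancel₀ _ (by positivity)
    have hδB : B * (2 * (ε / (4 * (B + 1)))) ≤ ε / 2 := by nlinarith
    linarith

theorem lowerInt_eq_neg_upperInt (g W : ℝ → ℝ) (a' b' : ℝ) :
    lowerInt g W a' b' = -upperInt (fun x => -g x) W a' b' := by
  rw [lowerInt, upperInt, iSup, iInf]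
  have h : Set.range (fun P : RSPartition a' b' => lowerSum g W P)
      = -Set.range (fun P : RSPartition a' b' => upperSum (fun x => -g x) W P) := by
    ext y
    simp only [Set.mem_range, Set.mem_neg]
    constructor
    · rintro ⟨P, rfl⟩
      exact ⟨P, by rw [lowerSum_eq_neg]; ring⟩
    · rintro ⟨P, hP⟩
      exact ⟨P, by rw [lowerSum_eq_neg, hP]; ring⟩
  rw [h, Real.sInf_def, neg_neg]

end Main


end Aux






theorem stmt15 (a b : ℝ) (hab : a < b) (f Ψ ψ : ℝ → ℝ)
    (hψpos : ∀ x ∈ Set.Icc a b, 0 < ψ x)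
    (hψbd : ∃ M, ∀ x ∈ Set.Icc a b, ψ x ≤ M)
    (hψint : RIntegrable ψ a b)
    (hΨ : ∀ x ∈ Set.Icc a b, Ψ x = Ψ a + RIntegral ψ a x)
    (hf : BoundedOnI f a b) :
    (RSIntegrable f Ψ a b ↔ RIntegrable (fun x => f x * ψ x) a b) ∧
    (RSIntegrable f Ψ a b →
      RSIntegral f Ψ a b = RIntegral (fun x => f x * ψ x) a b) := by
  obtain ⟨B0, hfB0⟩ := hf
  obtain ⟨Mb, hψM⟩ := hψbd
  have hψ0 : ∀ x ∈ Set.Icc a b, 0 ≤ ψ x := fun x hx => le_of_lt (hψpos x hx)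
  have hfB : ∀ x ∈ Set.Icc a b, |f x| ≤ |B0| := fun x hx =>
    le_trans (hfB0 x hx) (le_abs_self B0)
  have main1 : upperInt f Ψ a b = upperInt (fun x => f x * ψ x) id a b :=
    upperInt_eq_main hab (abs_nonneg B0) hfB hψ0 hψM hψint hΨ
  have main2 : upperInt (fun x => -f x) Ψ a b
      = upperInt (fun x => -f x * ψ x) id a b :=
    upperInt_eq_main hab (abs_nonneg B0)
      (fun x hx => by rw [abs_neg]; exact hfB x hx) hψ0 hψM hψint hΨ
  have hneg : (fun x => -f x * ψ x) = fun x => -(f x * ψ x) := by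
    funext x; ring
  rw [hneg] at main2
  have lower1 : lowerInt f Ψ a b = lowerInt (fun x => f x * ψ x) id a b := by
    rw [lowerInt_eq_neg_upperInt f Ψ a b,
      lowerInt_eq_neg_upperInt (fun x => f x * ψ x) id a b, main2]
  constructor
  · rw [RSIntegrable, RIntegrable, RSIntegrable, main1, lower1]
  · intro _
    rw [RSIntegral, RIntegral, RSIntegral, main1]
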